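/- X₁ (the set of all Σ δₙ αⁿ over revolving sequences starting with nonzero digit 1) equals the attractor K_{α,θ} of the IFS {ψ₁(z) = αz, ψ₂(z) = α e^{iθ} z + α}; that is, X₁ is the unique nonempty compact set K with K = ψ₁(K) ∪ ψ₂(K). -/

import Mathlib

open Complex

/-- e^{iθ} -/
noncomputable def rot (θ : ℝ) : ℂ := Complex.exp (θ * Complex.I)

/-- The digit set Δ_θ = {0, 1, e^{iθ}, …, e^{(p-1)iθ}}. -/
def Delta (θ : ℝ) (p : ℕ) : Set ℂ := insert 0 {z | ∃ k, k < p ∧ z = rot θ ^ k}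

/-- Generalized Revolving Condition: each nonzero digit is e^{iθ} times the previous
nonzero digit. Sequences are indexed from 1; index 0 is a dummy (digit 0). -/
def GRC (θ : ℝ) (δ : ℕ → ℂ) : Prop :=
  ∀ j k : ℕ, j < k → δ j ≠ 0 → δ k ≠ 0 → (∀ m, j < m → m < k → δ m = 0) →
    δ k = rot θ * δ j

/-- Membership in W_θ (with the convention δ 0 = 0, i.e. sequences start at index 1). -/
def Wrev (θ : ℝ) (p : ℕ) (δ : ℕ → ℂ) : Prop :=
  δ 0 = 0 ∧ (∀ n, δ n ∈ Delta θ p) ∧ GRC θ δ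

/-- The first nonzero digit of δ is c (or δ is identically zero). -/
def FirstNonzero (δ : ℕ → ℂ) (c : ℂ) : Prop :=
  (∀ n, δ n = 0) ∨ ∃ j, δ j = c ∧ ∀ m, m < j → δ m = 0

/-- X_c : points from revolving sequences whose first nonzero digit is c. -/
noncomputable def Xc (α : ℂ) (θ : ℝ) (p : ℕ) (c : ℂ) : Set ℂ :=
  {x | ∃ δ : ℕ → ℂ, Wrev θ p δ ∧ FirstNonzero δ c ∧ x = ∑' n, δ n * α ^ n}

/-- X_{α,θ} : points from all revolving sequences. -/
noncomputable def Xfull (α : ℂ) (θ : ℝ) (p : ℕ) : Set ℂ :=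
  {x | ∃ δ : ℕ → ℂ, Wrev θ p δ ∧ x = ∑' n, δ n * α ^ n}

/-!
A revolving sequence with first nonzero digit `1` is either `(0, 0, ε…)` or
`(0, 1, e^{iθ} η…)` with `ε`, `η` of the same kind; summing the series, this is the set
equation `X₁ = ψ₁ X₁ ∪ ψ₂ X₁`. `X₁` is compact as a continuous image of a closed subset of the
compact space `Δ_θ^ℕ`: each instance of the revolving condition involves only finitely many
digits. Both `ψ₁` and `ψ₂` are `‖α‖`-Lipschitz, so `K ↦ ψ₁ K ∪ ψ₂ K` contracts the Hausdorff
distance by `‖α‖ < 1`, and two nonempty compact fixed points are at distance `0`.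
-/

open scoped NNReal ENNReal

section Hutchinson

open Metric

variable {X : Type*}

theorem LipschitzWith.infEDist_image_le [PseudoEMetricSpace X] {f : X → X} {K : ℝ≥0}
    (hf : LipschitzWith K f) (x : X) {s : Set X} (hs : s.Nonempty) :
    infEDist (f x) (f '' s) ≤ K * infEDist x s := by
  rcases eq_or_ne K 0 with rfl | hK
  · obtain ⟨y, hy⟩ := hs
    simpa using (infEDist_le_edist_of_mem (Set.mem_image_of_mem f hy)).trans (hf x y)
  rw [mul_comm, ← ENNReal.div_le_iff (by simpa using hK) ENNReal.coe_ne_top, le_infEDist]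
  intro y hy
  rw [ENNReal.div_le_iff (by simpa using hK) ENNReal.coe_ne_top, mul_comm]
  exact (infEDist_le_edist_of_mem (Set.mem_image_of_mem f hy)).trans (hf x y)

theorem LipschitzWith.hausdorffEDist_image_le [PseudoEMetricSpace X] {f : X → X} {K : ℝ≥0}
    (hf : LipschitzWith K f) {s t : Set X} (hs : s.Nonempty) (ht : t.Nonempty) :
    hausdorffEDist (f '' s) (f '' t) ≤ K * hausdorffEDist s t := by
  refine hausdorffEDist_le_of_infEDist ?_ ?_ <;> rintro _ ⟨x, hx, rfl⟩
  · exact (hf.infEDist_image_le x ht).trans (by gcongr; exact infEDist_le_hausdorffEDist_of_mem hx)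
  · rw [hausdorffEDist_comm]
    exact (hf.infEDist_image_le x hs).trans (by gcongr; exact infEDist_le_hausdorffEDist_of_mem hx)

theorem ENNReal.eq_zero_of_le_mul_of_lt_one {d K : ℝ≥0∞} (hK : K < 1) (hd : d ≠ ∞)
    (h : d ≤ K * d) : d = 0 := by
  by_contra h0
  exact (h.trans_lt (by simpa using (ENNReal.mul_lt_mul_iff_left h0 hd).2 hK)).false

/-- Uniqueness half of Hutchinson's theorem for two contractions. -/
theorem eq_of_eq_image_union_image [EMetricSpace X] {f g : X → X} {K : ℝ≥0} (hK : K < 1)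
    (hf : LipschitzWith K f) (hg : LipschitzWith K g) {A B : Set X}
    (hA : A = f '' A ∪ g '' A) (hB : B = f '' B ∪ g '' B) (hAne : A.Nonempty)
    (hBne : B.Nonempty) (hAc : IsClosed A) (hBc : IsClosed B)
    (hAB : hausdorffEDist A B ≠ ∞) : A = B := by
  refine (hAc.hausdorffEDist_zero_iff hBc).1 (ENNReal.eq_zero_of_le_mul_of_lt_one
    (ENNReal.coe_lt_one_iff.2 hK) hAB ?_)
  calc hausdorffEDist A B = hausdorffEDist (f '' A ∪ g '' A) (f '' B ∪ g '' B) := by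
        rw [← hA, ← hB]
    _ ≤ max (hausdorffEDist (f '' A) (f '' B)) (hausdorffEDist (g '' A) (g '' B)) :=
        hausdorffEDist_union_le
    _ ≤ K * hausdorffEDist A B :=
        max_le (hf.hausdorffEDist_image_le hAne hBne) (hg.hausdorffEDist_image_le hAne hBne)

end Hutchinson

theorem DependsOn.isClosed_setOf {ι S : Type*} [TopologicalSpace S] [DiscreteTopology S]
    {P : (ι → S) → Prop} {s : Finset ι} (hP : DependsOn P s) : IsClosed {ω | P ω} := by
  have : {ω | P ω} = s.restrict ⁻¹' (s.restrict '' {ω | P ω}) := by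
    refine (Set.subset_preimage_image _ _).antisymm ?_
    rintro ω ⟨ω', hω', hrestrict⟩
    exact cast (hP fun i hi => congrFun hrestrict ⟨i, hi⟩) hω'
  rw [this]
  exact (isClosed_discrete _).preimage (Finset.continuous_restrict s)

theorem norm_rot (θ : ℝ) : ‖rot θ‖ = 1 :=
  Complex.norm_exp_ofReal_mul_I θ

theorem rot_ne_zero (θ : ℝ) : rot θ ≠ 0 := Complex.exp_ne_zero _

theorem rot_pow_eq_one {θ : ℝ} {p : ℕ} {q : ℤ} (hp : 0 < p)
    (hθ : θ = 2 * Real.pi * (q : ℝ) / (p : ℝ)) : rot θ ^ p = 1 := by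
  rw [rot, ← Complex.exp_nat_mul]
  have hp' : (p : ℂ) ≠ 0 := Nat.cast_ne_zero.mpr hp.ne'
  have : (p : ℂ) * (θ * I) = q * (2 * Real.pi * I) := by
    rw [hθ]; push_cast; field_simp
  rw [this, Complex.exp_int_mul_two_pi_mul_I]

section Digits

variable {θ : ℝ} {p : ℕ}

theorem zero_mem_Delta : (0 : ℂ) ∈ Delta θ p := Set.mem_insert _ _

theorem one_mem_Delta (hp : 0 < p) : (1 : ℂ) ∈ Delta θ p :=
  Or.inr ⟨0, hp, (pow_zero _).symm⟩

theorem finite_Delta : (Delta θ p).Finite :=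
  ((Set.finite_Iio p).image (rot θ ^ ·)).insert 0 |>.subset <| by
    rintro z (rfl | ⟨k, hk, rfl⟩)
    exacts [Set.mem_insert _ _, Set.mem_insert_of_mem _ ⟨k, hk, rfl⟩]

theorem norm_le_one_of_mem_Delta {z : ℂ} (hz : z ∈ Delta θ p) : ‖z‖ ≤ 1 := by
  rcases hz with rfl | ⟨k, -, rfl⟩
  · simp
  · rw [norm_pow, norm_rot, one_pow]

theorem rot_pow_mem_Delta (hrot : rot θ ^ p = 1) (hp : 0 < p) (m : ℕ) : rot θ ^ m ∈ Delta θ p :=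
  Or.inr ⟨m % p, Nat.mod_lt _ hp, pow_eq_pow_mod m hrot⟩

theorem rot_pow_mul_mem_Delta (hrot : rot θ ^ p = 1) (hp : 0 < p) (m : ℕ) {z : ℂ}
    (hz : z ∈ Delta θ p) : rot θ ^ m * z ∈ Delta θ p := by
  rcases hz with rfl | ⟨k, -, rfl⟩
  · rw [mul_zero]; exact zero_mem_Delta
  · rw [← pow_add]; exact rot_pow_mem_Delta hrot hp _

theorem firstNonzero_iff {δ : ℕ → ℂ} {c : ℂ} (hc : c ≠ 0) :
    FirstNonzero δ c ↔ ∀ j, (∀ m < j, δ m = 0) → δ j = 0 ∨ δ j = c := by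
  constructor
  · rintro (hzero | ⟨j₀, hj₀, hbefore⟩) j hj
    · exact Or.inl (hzero j)
    · rcases lt_trichotomy j j₀ with h | rfl | h
      · exact Or.inl (hbefore j h)
      · exact Or.inr hj₀
      · exact absurd (hj j₀ h) (hj₀ ▸ hc)
  · intro h
    by_cases hzero : ∀ n, δ n = 0
    · exact Or.inl hzero
    classical
    have hex : ∃ n, δ n ≠ 0 := not_forall.1 hzero
    have hbefore : ∀ m < Nat.find hex, δ m = 0 := fun m hm => not_not.1 (Nat.find_min hex hm)
    exact Or.inr ⟨_, (h _ hbefore).resolve_left (Nat.find_spec hex), hbefore⟩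

theorem FirstNonzero.const_mul {δ : ℕ → ℂ} {a : ℂ} (h : FirstNonzero δ a) (c : ℂ) :
    FirstNonzero (fun n => c * δ n) (c * a) := by
  rcases h with hzero | ⟨j, hj, hbefore⟩
  · exact Or.inl fun n => by simp only [hzero, mul_zero]
  · exact Or.inr ⟨j, by simp only [hj], fun m hm => by simp only [hbefore m hm, mul_zero]⟩

theorem GRC.const_mul {δ : ℕ → ℂ} (h : GRC θ δ) (c : ℂ) : GRC θ (fun n => c * δ n) := by
  intro j k hjk hj hk hgap
  simp only [ne_eq, mul_eq_zero, not_or] at hj hk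
  show c * δ k = rot θ * (c * δ j)
  rw [h j k hjk hj.2 hk.2 fun m hjm hmk => (mul_eq_zero.1 (hgap m hjm hmk)).resolve_left hj.1]
  ring

theorem Wrev.rot_pow_mul {δ : ℕ → ℂ} (h : Wrev θ p δ) (hrot : rot θ ^ p = 1) (hp : 0 < p)
    (m : ℕ) : Wrev θ p (fun n => rot θ ^ m * δ n) :=
  ⟨by simp only [h.1, mul_zero], fun n => rot_pow_mul_mem_Delta hrot hp m (h.2.1 n),
    h.2.2.const_mul _⟩

end Digits

def prependDigit (d : ℂ) (δ : ℕ → ℂ) : ℕ → ℂ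
  | 0 => 0
  | 1 => d
  | n + 2 => δ (n + 1)

def dropDigit (δ : ℕ → ℂ) : ℕ → ℂ
  | 0 => 0
  | n + 1 => δ (n + 2)

section Prepend

variable {θ : ℝ} {p : ℕ} {δ : ℕ → ℂ}

theorem prependDigit_dropDigit (h0 : δ 0 = 0) : prependDigit (δ 1) (dropDigit δ) = δ := by
  funext n
  rcases n with _ | _ | n
  exacts [h0.symm, rfl, rfl]

theorem firstNonzero_prependDigit_iff (h0 : δ 0 = 0) {c d : ℂ} (hc : c ≠ 0) :
    FirstNonzero (prependDigit d δ) c ↔ d = c ∨ d = 0 ∧ FirstNonzero δ c := by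
  simp only [firstNonzero_iff hc]
  constructor
  · intro h
    rcases h 1 (by simp [prependDigit]) with hd | hd
    · refine Or.inr ⟨hd, ?_⟩
      rintro (_ | j) hj
      · exact Or.inl h0
      refine h (j + 2) fun m hm => ?_
      rcases m with _ | _ | m
      exacts [rfl, hd, hj (m + 1) (by omega)]
    · exact Or.inl hd
  · rintro (rfl | ⟨rfl, h⟩) j hj
    · rcases j with _ | _ | j
      · exact Or.inl rfl
      · exact Or.inr rfl
      · exact absurd (hj 1 (by omega)) hc
    · rcases j with _ | _ | j
      · exact Or.inl rfl
      · exact Or.inl rfl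
      refine h (j + 1) fun m hm => ?_
      rcases m with _ | m
      exacts [h0, hj (m + 2) (by omega)]

theorem grc_prependDigit_iff (h0 : δ 0 = 0) {d : ℂ} :
    GRC θ (prependDigit d δ) ↔ GRC θ δ ∧ (d ≠ 0 → FirstNonzero δ (rot θ * d)) := by
  constructor
  · intro h
    refine ⟨fun j k hjk hj hk hgap => ?_, fun hd => ?_⟩
    · obtain ⟨j, rfl⟩ := Nat.exists_eq_add_one_of_ne_zero (n := j) fun hj0 => hj (hj0 ▸ h0)
      obtain ⟨k, rfl⟩ : ∃ i, k = i + 1 := ⟨k - 1, by omega⟩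
      refine h (j + 2) (k + 2) (by omega) hj hk fun m hjm hmk => ?_
      obtain ⟨m, rfl⟩ : ∃ i, m = i + 2 := ⟨m - 2, by omega⟩
      exact hgap (m + 1) (by omega) (by omega)
    · rw [firstNonzero_iff (mul_ne_zero (rot_ne_zero θ) hd)]
      rintro (_ | j) hj
      · exact Or.inl h0
      refine or_iff_not_imp_left.2 fun hz => h 1 (j + 2) (by omega) hd hz fun m h1m hmj => ?_
      obtain ⟨m, rfl⟩ : ∃ i, m = i + 2 := ⟨m - 2, by omega⟩
      exact hj (m + 1) (by omega)
  · rintro ⟨hG, hF⟩ (_ | _ | j) k hjk hj hk hgap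
    · exact absurd rfl hj
    · obtain ⟨k, rfl⟩ : ∃ i, k = i + 2 := ⟨k - 2, by omega⟩
      refine ((firstNonzero_iff (mul_ne_zero (rot_ne_zero θ) hj)).1 (hF hj) (k + 1)
        fun m hm => ?_).resolve_left hk
      rcases m with _ | m
      exacts [h0, hgap (m + 2) (by omega) (by omega)]
    · obtain ⟨k, rfl⟩ : ∃ i, k = i + 2 := ⟨k - 2, by omega⟩
      refine hG (j + 1) (k + 1) (by omega) hj hk fun m hjm hmk => ?_
      obtain ⟨m, rfl⟩ : ∃ i, m = i + 1 := ⟨m - 1, by omega⟩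
      exact hgap (m + 2) (by omega) (by omega)

theorem wrev_prependDigit_iff (h0 : δ 0 = 0) {d : ℂ} :
    Wrev θ p (prependDigit d δ) ↔
      d ∈ Delta θ p ∧ Wrev θ p δ ∧ (d ≠ 0 → FirstNonzero δ (rot θ * d)) := by
  have hdigits : (∀ n, prependDigit d δ n ∈ Delta θ p) ↔ d ∈ Delta θ p ∧ ∀ n, δ n ∈ Delta θ p := by
    constructor
    · intro h
      refine ⟨h 1, ?_⟩
      rintro (_ | n)
      exacts [h0 ▸ zero_mem_Delta, h (n + 2)]
    · rintro ⟨hd, h⟩ (_ | _ | n)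
      exacts [zero_mem_Delta, hd, h (n + 1)]
  simp only [Wrev, hdigits, grc_prependDigit_iff h0, h0, true_and]
  exact ⟨fun ⟨_, ⟨hd, h⟩, hG, hF⟩ => ⟨hd, ⟨h, hG⟩, hF⟩,
    fun ⟨hd, ⟨h, hG⟩, hF⟩ => ⟨rfl, ⟨hd, h⟩, hG, hF⟩⟩

end Prepend

section SetEquation

variable {α : ℂ} {θ : ℝ} {p : ℕ} {δ : ℕ → ℂ}

theorem hasSum_prependDigit (h0 : δ 0 = 0) {s : ℂ} (h : HasSum (fun n => δ n * α ^ n) s)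
    (d : ℂ) : HasSum (fun n => prependDigit d δ n * α ^ n) (α * (d + s)) := by
  rw [← hasSum_nat_add_iff' 2]
  have hterm : (fun n => prependDigit d δ (n + 2) * α ^ (n + 2)) =
      fun n => α * (δ (n + 1) * α ^ (n + 1)) := by
    funext n
    simp only [prependDigit]
    ring
  have hvalue : α * (d + s) - ∑ i ∈ Finset.range 2, prependDigit d δ i * α ^ i =
      α * (s - ∑ i ∈ Finset.range 1, δ i * α ^ i) := by
    simp only [Finset.sum_range_succ, Finset.range_one, Finset.sum_singleton, prependDigit,
      pow_zero, pow_one, mul_one, zero_add, h0, sub_zero]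
    ring
  rw [hterm, hvalue]
  exact ((hasSum_nat_add_iff' 1).2 h).mul_left α

theorem Wrev.summable (h : Wrev θ p δ) (hα : ‖α‖ < 1) : Summable fun n => δ n * α ^ n := by
  refine Summable.of_norm_bounded (summable_geometric_of_lt_one (norm_nonneg α) hα) fun n => ?_
  rw [norm_mul, norm_pow]
  exact mul_le_of_le_one_left (by positivity) (norm_le_one_of_mem_Delta (h.2.1 n))

theorem tsum_prependDigit (h0 : δ 0 = 0) (hs : Summable fun n => δ n * α ^ n) (d : ℂ) :
    ∑' n, prependDigit d δ n * α ^ n = α * (d + ∑' n, δ n * α ^ n) :=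
  (hasSum_prependDigit h0 hs.hasSum d).tsum_eq

theorem Xc_one_eq_image_union (hp : 0 < p) (hrot : rot θ ^ p = 1) (hα : ‖α‖ < 1) :
    Xc α θ p 1 =
      (fun z => α * z) '' Xc α θ p 1 ∪ (fun z => α * rot θ * z + α) '' Xc α θ p 1 := by
  have hinv : rot θ ^ (p - 1) * rot θ = 1 := by rw [← pow_succ, Nat.sub_add_cancel hp, hrot]
  ext x
  constructor
  · rintro ⟨δ, hW, hF, rfl⟩
    obtain ⟨d, ε, hε0, rfl⟩ : ∃ d ε, ε 0 = 0 ∧ δ = prependDigit d ε :=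
      ⟨δ 1, dropDigit δ, rfl, (prependDigit_dropDigit hW.1).symm⟩
    obtain ⟨-, hεW, hεF⟩ := (wrev_prependDigit_iff hε0).1 hW
    rw [tsum_prependDigit hε0 (hεW.summable hα)]
    rcases (firstNonzero_prependDigit_iff hε0 one_ne_zero).1 hF with rfl | ⟨rfl, hεF1⟩
    · -- `ε` starts with `rot θ`, so it is `rot θ` times a sequence starting with `1`
      have hηF := (hεF one_ne_zero).const_mul (rot θ ^ (p - 1))
      rw [mul_one, hinv] at hηF
      refine Or.inr ⟨_, ⟨_, hεW.rot_pow_mul hrot hp (p - 1), hηF, rfl⟩, ?_⟩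
      simp only [mul_assoc, tsum_mul_left]
      linear_combination (α * ∑' n, ε n * α ^ n) * hinv
    · exact Or.inl ⟨_, ⟨ε, hεW, hεF1, rfl⟩, by rw [zero_add]⟩
  · rintro (⟨y, ⟨δ, hW, hF, rfl⟩, rfl⟩ | ⟨y, ⟨δ, hW, hF, rfl⟩, rfl⟩)
    · refine ⟨prependDigit 0 δ, (wrev_prependDigit_iff hW.1).2 ⟨zero_mem_Delta, hW, ?_⟩,
        (firstNonzero_prependDigit_iff hW.1 one_ne_zero).2 (Or.inr ⟨rfl, hF⟩), ?_⟩
      · exact fun h => absurd rfl h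
      · rw [tsum_prependDigit hW.1 (hW.summable hα), zero_add]
    · have hεW : Wrev θ p (fun n => rot θ * δ n) := by simpa using hW.rot_pow_mul hrot hp 1
      refine ⟨prependDigit 1 (fun n => rot θ * δ n),
        (wrev_prependDigit_iff hεW.1).2 ⟨one_mem_Delta hp, hεW, fun _ => hF.const_mul (rot θ)⟩,
        (firstNonzero_prependDigit_iff hεW.1 one_ne_zero).2 (Or.inl rfl), ?_⟩
      rw [tsum_prependDigit hεW.1 (hεW.summable hα)]
      simp only [mul_assoc, tsum_mul_left]
      ring

end SetEquation

section Compactness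

variable {S : Type*} [TopologicalSpace S] [DiscreteTopology S]

theorem isClosed_setOf_grc (θ : ℝ) (v : S → ℂ) : IsClosed {ω : ℕ → S | GRC θ (v ∘ ω)} := by
  simp only [GRC]
  rw [Set.ofPred_forall]
  refine isClosed_iInter fun j => ?_
  rw [Set.ofPred_forall]
  refine isClosed_iInter fun k => DependsOn.isClosed_setOf (s := Finset.Iic k) fun x y hxy => ?_
  have e : ∀ m ≤ k, v (x m) = v (y m) := fun m hm => congrArg v (hxy m (by simpa using hm))
  have hgap : (∀ m, j < m → m < k → v (x m) = 0) ↔ (∀ m, j < m → m < k → v (y m) = 0) :=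
    forall_congr' fun m => imp_congr_right fun _ => imp_congr_right fun hmk => by rw [e m hmk.le]
  refine propext (imp_congr_right fun hjk => ?_)
  simp only [Function.comp_apply, e j hjk.le, e k le_rfl, hgap]

theorem isClosed_setOf_firstNonzero {c : ℂ} (hc : c ≠ 0) (v : S → ℂ) :
    IsClosed {ω : ℕ → S | FirstNonzero (v ∘ ω) c} := by
  simp only [firstNonzero_iff hc]
  rw [Set.ofPred_forall]
  refine isClosed_iInter fun j => DependsOn.isClosed_setOf (s := Finset.Iic j) fun x y hxy => ?_
  have e : ∀ m ≤ j, v (x m) = v (y m) := fun m hm => congrArg v (hxy m (by simpa using hm))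
  have hbefore : (∀ m < j, v (x m) = 0) ↔ (∀ m < j, v (y m) = 0) :=
    forall_congr' fun m => imp_congr_right fun hmj => by rw [e m hmj.le]
  simp only [Function.comp_apply, hbefore, e j le_rfl]

end Compactness

theorem Xc_nonempty (α : ℂ) (θ : ℝ) (p : ℕ) (c : ℂ) : (Xc α θ p c).Nonempty :=
  ⟨_, fun _ => 0, ⟨rfl, fun _ => zero_mem_Delta, fun _ _ _ hj => absurd rfl hj⟩,
    Or.inl fun _ => rfl, rfl⟩

theorem isCompact_Xc {α : ℂ} (θ : ℝ) (p : ℕ) (hα : ‖α‖ < 1) {c : ℂ} (hc : c ≠ 0) :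
    IsCompact (Xc α θ p c) := by
  have : Finite (Delta θ p) := finite_Delta.to_subtype
  let digits : Set (ℕ → Delta θ p) :=
    {ω | (ω 0 : ℂ) = 0 ∧ GRC θ (Subtype.val ∘ ω) ∧ FirstNonzero (Subtype.val ∘ ω) c}
  have hclosed : IsClosed digits :=
    (isClosed_eq (continuous_subtype_val.comp (continuous_apply 0)) continuous_const).inter
      ((isClosed_setOf_grc θ Subtype.val).inter (isClosed_setOf_firstNonzero hc Subtype.val))
  have hcont : Continuous fun ω : ℕ → Delta θ p => ∑' n, (ω n : ℂ) * α ^ n := by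
    refine continuous_tsum (fun n => (continuous_subtype_val.comp (continuous_apply n)).mul
      continuous_const) (summable_geometric_of_lt_one (norm_nonneg α) hα) fun n ω => ?_
    rw [norm_mul, norm_pow]
    exact mul_le_of_le_one_left (by positivity) (norm_le_one_of_mem_Delta (ω n).2)
  have himage : Xc α θ p c = (fun ω : ℕ → Delta θ p => ∑' n, (ω n : ℂ) * α ^ n) '' digits := by
    ext x
    constructor
    · rintro ⟨δ, hW, hF, rfl⟩
      exact ⟨fun n => ⟨δ n, hW.2.1 n⟩, ⟨hW.1, hW.2.2, hF⟩, rfl⟩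
    · rintro ⟨ω, ⟨h0, hG, hF⟩, rfl⟩
      exact ⟨fun n => ω n, ⟨h0, fun n => (ω n).2, hG⟩, hF, rfl⟩
  exact himage ▸ hclosed.isCompact.image hcont

theorem X1_is_attractor_general (α : ℂ) (θ : ℝ) (p : ℕ) (q : ℤ) (hp : 0 < p)
    (hθ : θ = 2 * Real.pi * (q : ℝ) / (p : ℝ)) (hα : ‖α‖ < 1) :
    (Xc α θ p 1).Nonempty ∧ IsCompact (Xc α θ p 1) ∧
    Xc α θ p 1 =
      (fun z => α * z) '' Xc α θ p 1 ∪ (fun z => α * rot θ * z + α) '' Xc α θ p 1 ∧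
    ∀ K : Set ℂ, K.Nonempty → IsCompact K →
      K = (fun z => α * z) '' K ∪ (fun z => α * rot θ * z + α) '' K →
      K = Xc α θ p 1 := by
  have hX := Xc_one_eq_image_union hp (rot_pow_eq_one hp hθ) hα
  have hXne := Xc_nonempty α θ p 1
  have hXc := isCompact_Xc θ p hα one_ne_zero
  refine ⟨hXne, hXc, hX, fun K hKne hKc hK => ?_⟩
  have hψ₂ : LipschitzWith ‖α‖₊ fun z => α * rot θ * z + α :=
    LipschitzWith.of_dist_le_mul fun z w => by
      simp [dist_eq_norm, ← mul_sub, norm_rot]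
  exact eq_of_eq_image_union_image (mod_cast hα) (lipschitzWith_smul α) hψ₂ hK hX hKne hXne
    hKc.isClosed hXc.isClosed
    (Metric.hausdorffEDist_ne_top_of_nonempty_of_bounded hKne hXne hKc.isBounded hXc.isBounded)

/-- X₁ is the attractor of the IFS {ψ₁(z)=αz, ψ₂(z)=αe^{iθ}z+α}: it is
nonempty, compact, satisfies the set equation, and any nonempty compact solution equals it. -/
theorem X1_is_attractor (α : ℂ) (θ : ℝ) (p : ℕ) (q : ℤ) (hp : 0 < p)
    (hθ : θ = 2 * Real.pi * (q : ℝ) / (p : ℝ)) (hα0 : 0 < ‖α‖) (hα : ‖α‖ < 1) :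
    (Xc α θ p 1).Nonempty ∧ IsCompact (Xc α θ p 1) ∧
    Xc α θ p 1 =
      (fun z => α * z) '' Xc α θ p 1 ∪ (fun z => α * rot θ * z + α) '' Xc α θ p 1 ∧
    ∀ K : Set ℂ, K.Nonempty → IsCompact K →
      K = (fun z => α * z) '' K ∪ (fun z => α * rot θ * z + α) '' K →
      K = Xc α θ p 1 :=
  X1_is_attractor_general α θ p q hp hθ hα
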